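/- arXiv:1703.03224 — 2 statements merged into one kernel-verified Lean document; each statement's English description precedes it below -/
import Mathlib

section
/- The restriction b_{n,k}^I(x) := b_{n,k}(x,0) admits the expansion b_{n,k}^I(x) = Σ_{i=0}^{n−k} ((k−n)_i (−n−k−1)_i / (i!)²) x^{n−i}(x−1)^i, and the coefficient of x^{k}(x−1)^{n−k} (the term i = n−k) equals (2k+2)_{n−k}/(n−k)!, which is nonzero. -/
/-!
Write `m = n - k`, `E = n + k + 1`, `y = x - 1`, and `C(a, i)` for the generalized binomial
coefficient, so that `(-a)_i / i! = (-1)^i C(a, i)`. On the edge `x₂ = 0` the Legendre factor is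
`x ^ k * P_k 1 = x ^ k`, and the Jacobi factor is `∑ j, C(m, j) C(E + j, j) y ^ j`. The coefficients
of the claimed expansion are `C(m, i) C(E, i)`; expanding `x ^ (m - i) = (1 + y) ^ (m - i)`, the
coefficient of `y ^ j` becomes `C(m, j) ∑ i, C(j, i) C(E, i)`, which is `C(m, j) C(E + j, j)` by
Chu–Vandermonde. The top coefficient is `C(E, m) = (2k+2)_m / m!`, which is positive.
-/

open Polynomial

/-- The Legendre polynomials, via the classical three-term recursion. -/
noncomputable def legendreR : ℕ → ℝ[X]
  | 0 => 1
  | 1 => X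
  | (k + 2) =>
      C ((2 * (k : ℝ) + 3) / ((k : ℝ) + 2)) * (X * legendreR (k + 1))
        - C (((k : ℝ) + 1) / ((k : ℝ) + 2)) * legendreR k

/-- Homogenization of the Legendre polynomial: `u ^ k * P_k (v / u)` as a polynomial
expression in `(u, v)`. -/
noncomputable def homLeg (k : ℕ) (u v : ℝ) : ℝ :=
  ∑ j ∈ Finset.range (k + 1), (legendreR k).coeff j * v ^ j * u ^ (k - j)

/-- The Jacobi polynomial `P_m^{(0,β)}` via its terminating hypergeometric expansion. -/
noncomputable def jacobi0 (m : ℕ) (β x : ℝ) : ℝ :=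
  ∑ j ∈ Finset.range (m + 1),
    ((ascPochhammer ℝ j).eval (-(m : ℝ)) * (ascPochhammer ℝ j).eval ((m : ℝ) + β + 1))
      / ((j.factorial : ℝ) ^ 2) * ((1 - x) / 2) ^ j

/-- The orthogonal polynomials `b_{n,k}` on the reference triangle. -/
noncomputable def bnk (n k : ℕ) (x₁ x₂ : ℝ) : ℝ :=
  jacobi0 (n - k) (2 * (k : ℝ) + 1) (2 * (x₁ + x₂) - 1) * homLeg k (x₁ + x₂) (x₁ - x₂)

open Finset
open scoped Nat

theorem natDegree_legendreR_le (k : ℕ) : (legendreR k).natDegree ≤ k := by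
  induction k using legendreR.induct with
  | case1 => simp [legendreR]
  | case2 => simp [legendreR]
  | case3 k ih₀ ih₁ =>
    rw [legendreR]
    refine (natDegree_sub_le _ _).trans (max_le ?_ ?_)
    · refine natDegree_C_mul_le _ _ |>.trans <| natDegree_mul_le.trans ?_
      have := natDegree_X_le (R := ℝ)
      omega
    · exact natDegree_C_mul_le _ _ |>.trans (by omega)

theorem legendreR_eval_one (k : ℕ) : (legendreR k).eval 1 = 1 := by
  induction k using legendreR.induct with
  | case1 => simp [legendreR]
  | case2 => simp [legendreR]
  | case3 k ih₀ ih₁ =>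
    rw [legendreR]
    simp only [eval_sub, eval_mul, eval_C, eval_X, ih₀, ih₁, mul_one]
    field_simp
    ring

theorem homLeg_self (k : ℕ) (x : ℝ) : homLeg k x x = x ^ k := by
  have hcoeff : ∑ j ∈ range (k + 1), (legendreR k).coeff j = 1 := by
    simpa using (eval_eq_sum_range' (Nat.lt_succ_of_le (natDegree_legendreR_le k)) 1).symm.trans
      (legendreR_eval_one k)
  rw [homLeg, ← one_mul (x ^ k), ← hcoeff, sum_mul]
  refine sum_congr rfl fun j hj => ?_
  rw [mul_assoc, ← pow_add, Nat.add_sub_cancel' (Nat.le_of_lt_succ (mem_range.mp hj))]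

theorem ascPochhammer_eval_eq_factorial_mul_choose {R : Type*} [Ring R] [BinomialRing R]
    (r : R) (n : ℕ) : (ascPochhammer R n).eval r = n ! * Ring.choose (r + n - 1) n := by
  rw [← Ring.multichoose_eq, ← nsmul_eq_mul, Ring.factorial_nsmul_multichoose_eq_ascPochhammer,
    ascPochhammer_smeval_eq_eval]

section Field

variable {K : Type*} [Field K] [CharZero K] [BinomialRing K]

theorem ascPochhammer_eval_div_factorial (a : K) (n : ℕ) :
    (ascPochhammer K n).eval a / n ! = Ring.choose (a + n - 1) n := by
  rw [ascPochhammer_eval_eq_factorial_mul_choose,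
    mul_div_cancel_left₀ _ (Nat.cast_ne_zero.mpr n.factorial_ne_zero)]

theorem ascPochhammer_eval_neg_div_factorial (a : K) (n : ℕ) :
    (ascPochhammer K n).eval (-a) / n ! = (-1) ^ n * Ring.choose a n := by
  rw [ascPochhammer_eval_neg_eq_descPochhammer, descPochhammer_eval_eq_ascPochhammer, mul_div_assoc,
    ascPochhammer_eval_div_factorial]
  congr 2
  ring

theorem ascPochhammer_eval_neg_mul_div_factorial_sq (a b : K) (n : ℕ) :
    (ascPochhammer K n).eval (-a) * (ascPochhammer K n).eval (-b) / (n ! : K) ^ 2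
      = Ring.choose a n * Ring.choose b n := by
  rw [sq, mul_div_mul_comm, ascPochhammer_eval_neg_div_factorial,
    ascPochhammer_eval_neg_div_factorial, mul_mul_mul_comm, ← mul_pow]
  simp

end Field

section BinomialRing

variable {R : Type*} [CommRing R] [BinomialRing R]

theorem sum_range_choose_mul_ringChoose (a : R) (j : ℕ) :
    ∑ i ∈ range (j + 1), (j.choose i : R) * Ring.choose a i = Ring.choose (a + j) j := by
  rw [Ring.add_choose_eq j (Commute.all _ _), Nat.sum_antidiagonal_eq_sum_range_succ
    (fun i l => Ring.choose a i * Ring.choose (j : R) l)]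
  refine sum_congr rfl fun i hi => ?_
  rw [Ring.choose_natCast, Nat.choose_symm (Nat.le_of_lt_succ (mem_range.mp hi)), mul_comm]

theorem sum_range_choose_mul_ringChoose_mul_one_add_pow (m : ℕ) (a y : R) :
    ∑ i ∈ range (m + 1), (m.choose i : R) * Ring.choose a i * (1 + y) ^ (m - i) * y ^ i
      = ∑ j ∈ range (m + 1), (m.choose j : R) * Ring.choose (a + j) j * y ^ j := by
  calc _ = ∑ i ∈ range (m + 1), ∑ l ∈ range (m + 1 - i),
          (m.choose i : R) * Ring.choose a i * ((m - i).choose l : R) * y ^ (i + l) := by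
        refine sum_congr rfl fun i hi => ?_
        rw [add_comm 1 y, add_pow, Nat.sub_add_comm (Nat.le_of_lt_succ (mem_range.mp hi)),
          mul_sum, sum_mul]
        refine sum_congr rfl fun l _ => ?_
        rw [one_pow, pow_add]
        ring
    _ = ∑ j ∈ range (m + 1), ∑ i ∈ range (j + 1),
          (m.choose i : R) * Ring.choose a i * ((m - i).choose (j - i) : R) * y ^ (i + (j - i)) :=
        (sum_range_diag_flip _ _).symm
    _ = ∑ j ∈ range (m + 1),
          (m.choose j : R) * (∑ i ∈ range (j + 1), (j.choose i : R) * Ring.choose a i) * y ^ j := by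
        refine sum_congr rfl fun j _ => ?_
        rw [mul_sum, sum_mul]
        refine sum_congr rfl fun i hi => ?_
        have hij : i ≤ j := Nat.le_of_lt_succ (mem_range.mp hi)
        rw [Nat.add_sub_cancel' hij, mul_right_comm _ (Ring.choose a i), ← mul_assoc,
          ← Nat.cast_mul, ← Nat.choose_mul hij, Nat.cast_mul]
    _ = _ := by simp only [sum_range_choose_mul_ringChoose]

end BinomialRing

theorem bnk_edge (n k : ℕ) (x : ℝ) :
    bnk n k x 0 = jacobi0 (n - k) (2 * k + 1) (2 * x - 1) * x ^ k := by
  rw [bnk, add_zero, sub_zero, homLeg_self]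

theorem jacobi0_two_mul_sub_one (m : ℕ) (β x : ℝ) :
    jacobi0 m β (2 * x - 1)
      = ∑ j ∈ range (m + 1), (m.choose j : ℝ) * Ring.choose (m + β + j) j * (x - 1) ^ j := by
  refine sum_congr rfl fun j _ => ?_
  rw [sq, mul_div_mul_comm, ascPochhammer_eval_neg_div_factorial, ascPochhammer_eval_div_factorial,
    Ring.choose_natCast, show (m : ℝ) + β + 1 + j - 1 = m + β + j by ring,
    show (1 - (2 * x - 1)) / 2 = -1 * (x - 1) by ring, mul_pow]
  have hsign : ((-1 : ℝ) ^ j) * (-1) ^ j = 1 := by rw [← mul_pow]; simp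
  linear_combination (m.choose j : ℝ) * Ring.choose (m + β + j) j * (x - 1) ^ j * hsign

theorem bnk_edge_expansion (n k : ℕ) (hkn : k ≤ n) :
    (∀ x : ℝ, bnk n k x 0
        = ∑ i ∈ Finset.range (n - k + 1),
            ((ascPochhammer ℝ i).eval ((k : ℝ) - (n : ℝ))
                * (ascPochhammer ℝ i).eval (-(n : ℝ) - (k : ℝ) - 1)) / ((i.factorial : ℝ)) ^ 2
              * x ^ (n - i) * (x - 1) ^ i) ∧
    ((ascPochhammer ℝ (n - k)).eval ((k : ℝ) - (n : ℝ))
        * (ascPochhammer ℝ (n - k)).eval (-(n : ℝ) - (k : ℝ) - 1)) / (((n - k).factorial : ℝ)) ^ 2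
      = (ascPochhammer ℝ (n - k)).eval (2 * (k : ℝ) + 2) / ((n - k).factorial : ℝ) ∧
    (ascPochhammer ℝ (n - k)).eval (2 * (k : ℝ) + 2) / ((n - k).factorial : ℝ) ≠ 0 := by
  obtain ⟨m, rfl⟩ := Nat.exists_eq_add_of_le hkn
  have hcoeff (i : ℕ) : (ascPochhammer ℝ i).eval ((k : ℝ) - ↑(k + m))
      * (ascPochhammer ℝ i).eval (-↑(k + m) - (k : ℝ) - 1) / (i ! : ℝ) ^ 2
      = m.choose i * Ring.choose ((m : ℝ) + (2 * k + 1)) i := by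
    rw [← Ring.choose_natCast, ← ascPochhammer_eval_neg_mul_div_factorial_sq]
    congr 4 <;> push_cast <;> ring
  simp only [Nat.add_sub_cancel_left, hcoeff]
  refine ⟨fun x => ?_, ?_, ?_⟩
  · rw [bnk_edge, Nat.add_sub_cancel_left, jacobi0_two_mul_sub_one,
      ← sum_range_choose_mul_ringChoose_mul_one_add_pow, add_sub_cancel, sum_mul]
    refine sum_congr rfl fun i hi => ?_
    rw [show k + m - i = m - i + k by have := mem_range.mp hi; omega, pow_add]
    ring
  · rw [Nat.choose_self, Nat.cast_one, one_mul, ascPochhammer_eval_div_factorial]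
    congr 1
    ring
  · exact (div_pos (ascPochhammer_pos _ _ (by positivity)) (by positivity)).ne'
end

section
/- For each n ∈ ℕ, the polynomials b_{n,0}^I, b_{n,1}^I, …, b_{n,n}^I (restrictions of the orthogonal triangle polynomials to the edge x₂ = 0) form a basis of the space of univariate polynomials of degree ≤ n. -/
open Polynomial

/-! Every term of `b_{n,k}^I` carries a factor `X ^ (n - i)` with `n - i ≥ k`, so `X ^ k` divides
`b_{n,k}^I`, and its coefficient of `X ^ k` comes from the term `i = n - k` alone: it is
`(-1)^(n-k) (k-n)_{n-k} (-n-k-1)_{n-k} / ((n-k)!)^2`, which is nonzero because both Pochhammer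
symbols are evaluated at negative integers `-a` with `a ≥ n - k`. So the coefficient matrix of
`b_{n,0}^I, …, b_{n,n}^I` in the monomial basis of `degreeLE ℝ n` is triangular with nonzero
diagonal. -/

/-- The edge restriction `b_{n,k}^I` of the orthogonal triangle polynomial, as a
univariate polynomial. -/
noncomputable def bIpoly (n k : ℕ) : ℝ[X] :=
  ∑ i ∈ Finset.range (n - k + 1),
    C (((ascPochhammer ℝ i).eval ((k : ℝ) - (n : ℝ))
          * (ascPochhammer ℝ i).eval (-(n : ℝ) - (k : ℝ) - 1)) / ((i.factorial : ℝ)) ^ 2)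
      * X ^ (n - i) * (X - 1) ^ i

theorem Polynomial.linearIndependent_and_span_eq_degreeLT_of_coeff_triangular
    {R : Type*} [CommRing R] {n : ℕ} (p : Fin n → R[X])
    (hdeg : ∀ k, p k ∈ degreeLT R n) (hlow : ∀ k : Fin n, ∀ m < (k : ℕ), (p k).coeff m = 0)
    (hdiag : ∀ k, IsUnit ((p k).coeff (k : ℕ))) :
    LinearIndependent R p ∧ Submodule.span R (Set.range p) = degreeLT R n := by
  set q : Fin n → degreeLT R n := fun k => ⟨p k, hdeg k⟩
  have hq : (degreeLT R n).subtype ∘ q = p := rfl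
  have hlower : ((degreeLT.basis R n).toMatrix q).IsLowerTriangular := fun i j hij =>
    hlow j i hij
  have hbasis : LinearIndependent R q ∧ Submodule.span R (Set.range q) = ⊤ := by
    rw [(degreeLT.basis R n).is_basis_iff_det, Module.Basis.det_apply,
      Matrix.det_of_isLowerTriangular _ hlower]
    exact IsUnit.prod_univ_iff.mpr fun k => hdiag k
  refine ⟨hq ▸ hbasis.1.map' _ (Submodule.ker_subtype _), ?_⟩
  rw [← hq, Set.range_comp, ← Submodule.map_span, hbasis.2, Submodule.map_top,
    Submodule.range_subtype]

theorem ascPochhammer_eval_neg_natCast_ne_zero {R : Type*} [CommRing R] [IsDomain R]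
    [CharZero R] {i a : ℕ} (h : i ≤ a) : (ascPochhammer R i).eval (-(a : R)) ≠ 0 := by
  rw [Ne, ascPochhammer_eval_eq_zero_iff]
  rintro ⟨j, hj, hja⟩
  rw [neg_neg, Nat.cast_inj] at hja
  omega

lemma bIpoly_mem_degreeLE (n k : ℕ) : bIpoly n k ∈ degreeLE ℝ n := by
  refine Submodule.sum_mem _ fun i hi => mem_degreeLE.mpr ?_
  refine (degree_le_natDegree).trans (Nat.cast_le.mpr ?_)
  compute_degree
  grind

lemma X_pow_dvd_bIpoly {n k : ℕ} (hk : k ≤ n) : X ^ k ∣ bIpoly n k := by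
  refine Finset.dvd_sum fun i hi => ?_
  have : k ≤ n - i := by grind
  exact ((pow_dvd_pow X this).mul_left _).mul_right _

lemma coeff_bIpoly_self_ne_zero {n k : ℕ} (hk : k ≤ n) : (bIpoly n k).coeff k ≠ 0 := by
  rw [bIpoly, finsetSum_coeff, Finset.sum_eq_single (n - k) (fun i hi hne => by
      rw [mul_comm (C _), mul_assoc, coeff_X_pow_mul', if_neg (by grind)]) (by simp),
    mul_comm (C _), mul_assoc, coeff_X_pow_mul', if_pos (by omega), coeff_C_mul,
    Nat.sub_sub_self hk, Nat.sub_self, coeff_zero_eq_eval_zero]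
  have hkn : (k : ℝ) - n = -((n - k : ℕ) : ℝ) := by push_cast [hk]; ring
  have hnk : -(n : ℝ) - k - 1 = -((n + k + 1 : ℕ) : ℝ) := by push_cast; ring
  rw [hkn, hnk]
  refine mul_ne_zero (div_ne_zero (mul_ne_zero ?_ ?_) (by positivity)) (by simp)
  · exact ascPochhammer_eval_neg_natCast_ne_zero le_rfl
  · exact ascPochhammer_eval_neg_natCast_ne_zero (by omega)

theorem bI_basis (n : ℕ) :
    LinearIndependent ℝ (fun k : Fin (n + 1) => bIpoly n k) ∧
    Submodule.span ℝ (Set.range (fun k : Fin (n + 1) => bIpoly n k))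
      = Polynomial.degreeLE ℝ (n : ℕ) := by
  rw [← degreeLT_succ_eq_degreeLE (R := ℝ)]
  refine linearIndependent_and_span_eq_degreeLT_of_coeff_triangular _
    (fun k => by rw [degreeLT_succ_eq_degreeLE]; exact bIpoly_mem_degreeLE n k)
    (fun k => X_pow_dvd_iff.mp (X_pow_dvd_bIpoly (Fin.is_le k)))
    (fun k => isUnit_iff_ne_zero.mpr (coeff_bIpoly_self_ne_zero (Fin.is_le k)))
end
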